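/- arXiv:1512.00425 — 4 statements merged into one kernel-verified Lean document; each statement's English description precedes it below -/
import Mathlib

section
/- Let γ₁, γ₂ > 0 and let 𝐅, 𝐆 be continuous distribution functions concentrated on (0,∞) whose survival functions 𝐅̄ := 1−𝐅 and 𝐆̄ := 1−𝐆 are regularly varying at infinity with indices −1/γ₁ and −1/γ₂ respectively. Let μ_𝐅 and μ_𝐆 denote the Lebesgue–Stieltjes measures of 𝐅 and 𝐆, set p := ∫_{(0,∞)} 𝐆̄(z) dμ_𝐅(z) (assumed positive), and define G(y) := p^{−1} ∫_{(0,y]} 𝐅(z) dμ_𝐆(z). Then the survival function Ḡ := 1−G is regularly varying at infinity with index −1/γ₂; that is, for every s > 0, Ḡ(sy)/Ḡ(y) → s^{−1/γ₂} as y → ∞. -/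
open MeasureTheory Filter Set

/-- The survival function of the observed truncation variable `Y` in the random
right-truncation model is regularly varying at infinity with index `-1/γ₂`. -/
theorem truncated_G_regularly_varying
    (γ₁ γ₂ : ℝ) (hγ₁ : 0 < γ₁) (hγ₂ : 0 < γ₂)
    (F G : StieltjesFunction ℝ)
    (hFcont : Continuous F) (hGcont : Continuous G)
    (hF0 : ∀ x ≤ (0 : ℝ), F x = 0) (hG0 : ∀ x ≤ (0 : ℝ), G x = 0)
    (hFtop : Tendsto F atTop (nhds 1)) (hGtop : Tendsto G atTop (nhds 1))
    (hFrv : ∀ x > (0 : ℝ),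
      Tendsto (fun z => (1 - F (x * z)) / (1 - F z)) atTop (nhds (x ^ (-1 / γ₁))))
    (hGrv : ∀ x > (0 : ℝ),
      Tendsto (fun z => (1 - G (x * z)) / (1 - G z)) atTop (nhds (x ^ (-1 / γ₂))))
    (p : ℝ) (hp : p = ∫ z in Set.Ioi (0 : ℝ), (1 - G z) ∂F.measure) (hppos : 0 < p)
    (Gobs : ℝ → ℝ)
    (hGobs : ∀ y, Gobs y = p⁻¹ * ∫ z in Set.Ioc (0 : ℝ) y, F z ∂G.measure) :
    ∀ s > (0 : ℝ),
      Tendsto (fun y => (1 - Gobs (s * y)) / (1 - Gobs y)) atTop (nhds (s ^ (-1 / γ₂))) := by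
  -- basic limits at -∞
  have hFbot : Tendsto F atBot (nhds 0) := by
    refine Tendsto.congr' ?_ tendsto_const_nhds
    filter_upwards [eventually_le_atBot (0:ℝ)] with x hx
    exact (hF0 x hx).symm
  have hGbot : Tendsto G atBot (nhds 0) := by
    refine Tendsto.congr' ?_ tendsto_const_nhds
    filter_upwards [eventually_le_atBot (0:ℝ)] with x hx
    exact (hG0 x hx).symm
  haveI := F.isProbabilityMeasure hFbot hFtop
  haveI := G.isProbabilityMeasure hGbot hGtop
  -- left limits coincide with values
  have hleftF : ∀ x, Function.leftLim F x = F x := fun x =>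
    leftLim_eq_of_tendsto (h := nhdsLT_neBot x)
      ((hFcont.tendsto x).mono_left nhdsWithin_le_nhds)
  have hleftG : ∀ x, Function.leftLim G x = G x := fun x =>
    leftLim_eq_of_tendsto (h := nhdsLT_neBot x)
      ((hGcont.tendsto x).mono_left nhdsWithin_le_nhds)
  -- pointwise bounds
  have hFnn : ∀ x, 0 ≤ F x := by
    intro x
    rcases le_or_gt x 0 with h | h
    · simp [hF0 x h]
    · have := F.mono h.le
      simpa [hF0 0 le_rfl] using this
  have hFle1 : ∀ x, F x ≤ 1 := F.mono.ge_of_tendsto hFtop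
  have hGle1 : ∀ x, G x ≤ 1 := G.mono.ge_of_tendsto hGtop
  -- the true survival function of G is everywhere positive
  have hGbpos : ∀ y, 0 < 1 - G y := by
    intro y
    have h1 : Tendsto (fun z => (1 - G (1 * z)) / (1 - G z)) atTop
        (nhds ((1:ℝ) ^ (-1 / γ₂))) := hGrv 1 one_pos
    have h2 : ∀ᶠ z in atTop, (1:ℝ)/2 < (1 - G (1 * z)) / (1 - G z) := by
      refine h1.eventually (eventually_gt_nhds ?_)
      rw [Real.one_rpow]; norm_num
    obtain ⟨z, hzy, hz⟩ := (h2.and (eventually_ge_atTop y)).exists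
    have hzne : 1 - G z ≠ 0 := by
      intro h0
      rw [one_mul, h0, div_zero] at hzy
      norm_num at hzy
    have hzpos : 0 < 1 - G z := lt_of_le_of_ne (by linarith [hGle1 z]) (Ne.symm hzne)
    have : G y ≤ G z := G.mono hz
    linarith
  -- measures of half-lines
  have hGIoi : ∀ z, G.measure (Ioi z) = ENNReal.ofReal (1 - G z) := by
    intro z
    have h1 : G.measure (Ioi z) ≤ G.measure (Ici z) := measure_mono Ioi_subset_Ici_self
    have hsing : G.measure {z} = 0 := by
      rw [G.measure_singleton, hleftG, sub_self, ENNReal.ofReal_zero]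
    have h2 : G.measure (Ici z) ≤ G.measure (Ioi z) := by
      have : Ici z ⊆ {z} ∪ Ioi z := by
        intro x hx
        rcases eq_or_lt_of_le (mem_Ici.mp hx) with h | h
        · exact Or.inl (by simp [h.symm])
        · exact Or.inr h
      calc G.measure (Ici z) ≤ G.measure ({z} ∪ Ioi z) := measure_mono this
        _ ≤ G.measure {z} + G.measure (Ioi z) := measure_union_le _ _
        _ = G.measure (Ioi z) := by rw [hsing, zero_add]
    have := le_antisymm h1 h2
    rw [this, G.measure_Ici hGtop, hleftG]
  -- integrability of F with respect to G's measure
  have hFint : Integrable F G.measure := by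
    refine Integrable.mono' (integrable_const 1) hFcont.aestronglyMeasurable ?_
    filter_upwards with x
    rw [Real.norm_eq_abs, abs_of_nonneg (hFnn x)]
    exact hFle1 x
  -- the key Fubini identity : p = ∫_{(0,∞)} F dμ_G
  have hpF : p = ∫ w in Ioi (0:ℝ), F w ∂G.measure := by
    have hS : MeasurableSet {q : ℝ × ℝ | q.1 < q.2} :=
      measurableSet_lt measurable_fst measurable_snd
    set μ := F.measure.restrict (Ioi (0:ℝ)) with hμ
    have hL : (μ.prod G.measure) {q : ℝ × ℝ | q.1 < q.2}
        = ∫⁻ z in Ioi (0:ℝ), ENNReal.ofReal (1 - G z) ∂F.measure := by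
      rw [Measure.prod_apply hS]
      simp only [hμ]
      refine setLIntegral_congr_fun measurableSet_Ioi ?_
      intro z _
      beta_reduce
      have : Prod.mk z ⁻¹' {q : ℝ × ℝ | q.1 < q.2} = Ioi z := rfl
      rw [this, hGIoi]
    have hR : (μ.prod G.measure) {q : ℝ × ℝ | q.1 < q.2}
        = ∫⁻ w, ENNReal.ofReal (F w) ∂G.measure := by
      rw [Measure.prod_apply_symm hS]
      refine lintegral_congr fun w => ?_
      have h1 : (fun x => (x, w)) ⁻¹' {q : ℝ × ℝ | q.1 < q.2} = Iio w := rfl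
      rw [h1, hμ, Measure.restrict_apply measurableSet_Iio]
      have h2 : Iio w ∩ Ioi (0:ℝ) = Ioo 0 w := by
        ext x; simp [mem_Ioo, and_comm]
      rw [h2, F.measure_Ioo, hleftF, hF0 0 le_rfl, sub_zero]
    have hRsplit : ∫⁻ w, ENNReal.ofReal (F w) ∂G.measure
        = ∫⁻ w in Ioi (0:ℝ), ENNReal.ofReal (F w) ∂G.measure := by
      rw [← lintegral_add_compl (fun w => ENNReal.ofReal (F w))
        (measurableSet_Ioi (a := (0:ℝ)))]
      have h0 : ∫⁻ w in (Ioi (0:ℝ))ᶜ, ENNReal.ofReal (F w) ∂G.measure = 0 := by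
        rw [compl_Ioi]
        have : ∫⁻ w in Iic (0:ℝ), ENNReal.ofReal (F w) ∂G.measure
            = ∫⁻ _ in Iic (0:ℝ), 0 ∂G.measure := by
          refine setLIntegral_congr_fun measurableSet_Iic ?_
          intro w hw
          beta_reduce
          rw [hF0 w hw, ENNReal.ofReal_zero]
        rw [this, lintegral_zero]
      rw [h0, add_zero]
    have hGbnn : 0 ≤ᶠ[ae (F.measure.restrict (Ioi (0:ℝ)))] fun z => 1 - G z := by
      refine Eventually.of_forall fun z => ?_
      show (0:ℝ) ≤ 1 - G z
      linarith [hGle1 z]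
    have hFnnae : 0 ≤ᶠ[ae (G.measure.restrict (Ioi (0:ℝ)))] F := by
      refine Eventually.of_forall fun z => ?_
      show (0:ℝ) ≤ F z
      exact hFnn z
    rw [hp,
      integral_eq_lintegral_of_nonneg_ae hGbnn
        (continuous_const.sub hGcont).aestronglyMeasurable,
      integral_eq_lintegral_of_nonneg_ae hFnnae hFcont.aestronglyMeasurable]
    rw [← hL, hR, hRsplit]
  -- split of the integral, giving the formula for the observed survival function
  have hIform : ∀ y > (0:ℝ), p * (1 - Gobs y) = ∫ w in Ioi y, F w ∂G.measure := by
    intro y hy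
    have hsplit : ∫ w in Ioi (0:ℝ), F w ∂G.measure
        = (∫ w in Ioc (0:ℝ) y, F w ∂G.measure) + ∫ w in Ioi y, F w ∂G.measure := by
      rw [← setIntegral_union (Ioc_disjoint_Ioi le_rfl) measurableSet_Ioi
        hFint.integrableOn hFint.integrableOn, Ioc_union_Ioi_eq_Ioi hy.le]
    have := hGobs y
    have hmul : p * Gobs y = ∫ w in Ioc (0:ℝ) y, F w ∂G.measure := by
      rw [this, ← mul_assoc, mul_inv_cancel₀ hppos.ne', one_mul]
    rw [mul_sub, mul_one, hmul, hpF, hsplit]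
    ring
  -- bounds for the tail integral
  have hub : ∀ y, ∫ w in Ioi y, F w ∂G.measure ≤ 1 - G y := by
    intro y
    have h1 : ∫ w in Ioi y, F w ∂G.measure ≤ ∫ _ in Ioi y, (1:ℝ) ∂G.measure :=
      setIntegral_mono_on hFint.integrableOn (integrable_const 1).integrableOn
        measurableSet_Ioi (fun w _ => hFle1 w)
    rw [setIntegral_const, measureReal_def, hGIoi, smul_eq_mul, mul_one,
      ENNReal.toReal_ofReal (hGbpos y).le] at h1
    exact h1
  have hlb : ∀ y, F y * (1 - G y) ≤ ∫ w in Ioi y, F w ∂G.measure := by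
    intro y
    have h1 : ∫ _ in Ioi y, F y ∂G.measure ≤ ∫ w in Ioi y, F w ∂G.measure :=
      setIntegral_mono_on (integrable_const (F y)).integrableOn hFint.integrableOn
        measurableSet_Ioi (fun w hw => F.mono (le_of_lt hw))
    rw [setIntegral_const, measureReal_def, hGIoi, smul_eq_mul,
      ENNReal.toReal_ofReal (hGbpos y).le, mul_comm] at h1
    exact h1
  -- main limit
  intro s hs
  have hsy : Tendsto (fun y : ℝ => s * y) atTop atTop :=
    (tendsto_const_mul_atTop_of_pos hs).mpr tendsto_id
  have hFsy : Tendsto (fun y => F (s * y)) atTop (nhds 1) := hFtop.comp hsy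
  have hGr := hGrv s hs
  -- lower and upper sandwiching functions
  have hlow : Tendsto (fun y => F (s * y) * ((1 - G (s * y)) / (1 - G y))) atTop
      (nhds (s ^ (-1 / γ₂))) := by
    have := hFsy.mul hGr
    simpa using this
  have hupp : Tendsto (fun y => ((1 - G (s * y)) / (1 - G y)) / F y) atTop
      (nhds (s ^ (-1 / γ₂))) := by
    have := hGr.div hFtop one_ne_zero
    simpa [Pi.div_def] using this
  refine tendsto_of_tendsto_of_tendsto_of_le_of_le' hlow hupp ?_ ?_
  · -- lower bound eventually
    filter_upwards [eventually_gt_atTop (0:ℝ),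
      hFtop.eventually (lt_mem_nhds (by norm_num : (1:ℝ)/2 < 1))] with y hy hFy
    have hFypos : 0 < F y := by linarith
    have hI := hIform y hy
    have hIs := hIform (s * y) (mul_pos hs hy)
    have hIpos : 0 < ∫ w in Ioi y, F w ∂G.measure :=
      lt_of_lt_of_le (mul_pos hFypos (hGbpos y)) (hlb y)
    have hIsnn : 0 ≤ ∫ w in Ioi (s*y), F w ∂G.measure :=
      le_trans (mul_nonneg (hFnn _) (hGbpos _).le) (hlb (s*y))
    have hGobsy : 1 - Gobs y = (∫ w in Ioi y, F w ∂G.measure) / p := by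
      field_simp at hI ⊢; linarith
    have hGobssy : 1 - Gobs (s*y) = (∫ w in Ioi (s*y), F w ∂G.measure) / p := by
      field_simp at hIs ⊢; linarith
    rw [hGobsy, hGobssy, div_div_div_cancel_right₀ hppos.ne' _ _]
    calc F (s * y) * ((1 - G (s * y)) / (1 - G y))
        = (F (s*y) * (1 - G (s*y))) / (1 - G y) := by ring
      _ ≤ (∫ w in Ioi (s*y), F w ∂G.measure) / (1 - G y) := by
          gcongr; exacts [(hGbpos y).le, hlb (s*y)]
      _ ≤ (∫ w in Ioi (s*y), F w ∂G.measure) / (∫ w in Ioi y, F w ∂G.measure) := by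
          gcongr; exact hub y
  · -- upper bound eventually
    filter_upwards [eventually_gt_atTop (0:ℝ),
      hFtop.eventually (lt_mem_nhds (by norm_num : (1:ℝ)/2 < 1))] with y hy hFy
    have hFypos : 0 < F y := by linarith
    have hI := hIform y hy
    have hIs := hIform (s * y) (mul_pos hs hy)
    have hIpos : 0 < ∫ w in Ioi y, F w ∂G.measure :=
      lt_of_lt_of_le (mul_pos hFypos (hGbpos y)) (hlb y)
    have hGobsy : 1 - Gobs y = (∫ w in Ioi y, F w ∂G.measure) / p := by
      field_simp at hI ⊢; linarith
    have hGobssy : 1 - Gobs (s*y) = (∫ w in Ioi (s*y), F w ∂G.measure) / p := by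
      field_simp at hIs ⊢; linarith
    rw [hGobsy, hGobssy, div_div_div_cancel_right₀ hppos.ne' _ _]
    calc (∫ w in Ioi (s*y), F w ∂G.measure) / (∫ w in Ioi y, F w ∂G.measure)
        ≤ (1 - G (s*y)) / (∫ w in Ioi y, F w ∂G.measure) :=
          div_le_div_of_nonneg_right (hub (s*y)) hIpos.le
      _ ≤ (1 - G (s*y)) / (F y * (1 - G y)) :=
          div_le_div_of_nonneg_left (hGbpos (s*y)).le (mul_pos hFypos (hGbpos y)) (hlb y)
      _ = ((1 - G (s*y)) / (1 - G y)) / F y := by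
          rw [div_div]; ring_nf
end

section
/- Let γ₁, γ₂ > 0 and let 𝐅, 𝐆 be continuous distribution functions concentrated on (0,∞) whose survival functions 𝐅̄ := 1−𝐅 and 𝐆̄ := 1−𝐆 are regularly varying at infinity with indices −1/γ₁ and −1/γ₂ respectively. Let μ_𝐅 denote the Lebesgue–Stieltjes measure of 𝐅, set p := ∫_{(0,∞)} 𝐆̄(z) dμ_𝐅(z) (assumed positive), and define F(x) := p^{−1} ∫_{(0,x]} 𝐆̄(z) dμ_𝐅(z). Then the survival function F̄ := 1−F is regularly varying at infinity with index −1/γ, where γ := γ₁γ₂/(γ₁+γ₂); that is, for every s > 0, F̄(sx)/F̄(x) → s^{−1/γ} as x → ∞. -/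
/-!
Write `T x = ∫_{(x,∞)} 𝐆̄ d μ_𝐅`, so that `1 - F = T / p` on `(0, ∞)`. Cutting `(x, ∞)` along the
geometric grid `x, l x, l² x, …` and bounding the decreasing `𝐆̄` on each piece by its endpoint
values squeezes `T x / (𝐆̄ x 𝐅̄ x)` between upper and lower Riemann–Stieltjes sums of
`∫_{[1,∞)} t^(-1/γ₂) d(-t^(-1/γ₁))`. These sums pinch together as `l → 1` and `N → ∞`, so the ratio
tends to a positive constant, and `T` inherits regular variation from the product `𝐆̄ 𝐅̄`, whose
index is `-1/γ₂ - 1/γ₁ = -1/γ`.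
-/

open MeasureTheory Filter Set Topology

def IsRegularlyVaryingAtTop (f : ℝ → ℝ) (ρ : ℝ) : Prop :=
  ∀ x > (0 : ℝ), Tendsto (fun z => f (x * z) / f z) atTop (𝓝 (x ^ ρ))

namespace IsRegularlyVaryingAtTop

variable {f g : ℝ → ℝ} {ρ σ : ℝ}

theorem mul (hf : IsRegularlyVaryingAtTop f ρ) (hg : IsRegularlyVaryingAtTop g σ) :
    IsRegularlyVaryingAtTop (fun z => f z * g z) (ρ + σ) := by
  intro x hx
  simp_rw [mul_div_mul_comm, Real.rpow_add hx]
  exact (hf x hx).mul (hg x hx)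

theorem const_mul (hf : IsRegularlyVaryingAtTop f ρ) {c : ℝ} (hc : c ≠ 0) :
    IsRegularlyVaryingAtTop (fun z => c * f z) ρ := by
  intro x hx
  simp_rw [mul_div_mul_left _ _ hc]
  exact hf x hx

theorem of_tendsto {c : ℝ} (hf : Tendsto f atTop (𝓝 c)) (hc : c ≠ 0) :
    IsRegularlyVaryingAtTop f 0 := by
  intro x hx
  rw [Real.rpow_zero, ← div_self hc]
  exact (hf.comp (tendsto_id.const_mul_atTop hx)).div hf hc

theorem congr' (hf : IsRegularlyVaryingAtTop f ρ) (hfg : f =ᶠ[atTop] g) :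
    IsRegularlyVaryingAtTop g ρ := by
  intro x hx
  refine (hf x hx).congr' ?_
  filter_upwards [hfg, (tendsto_id.const_mul_atTop hx).eventually hfg] with z hz hxz
  rw [hz, show f (x * z) = g (x * z) from hxz]

/-- Otherwise `f (2 * z) / f z = 0 / 0 = 0` eventually, while `2 ^ ρ > 0`. -/
theorem pos_of_antitone (hf : IsRegularlyVaryingAtTop f ρ) (hf_anti : Antitone f)
    (hf_nonneg : ∀ x, 0 ≤ f x) (x : ℝ) : 0 < f x := by
  by_contra! hx
  have hzero : ∀ z ≥ x, f z = 0 := fun z hz => le_antisymm ((hf_anti hz).trans hx) (hf_nonneg z)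
  have hlim : Tendsto (fun z => f (2 * z) / f z) atTop (𝓝 0) := by
    refine tendsto_const_nhds.congr' ?_
    filter_upwards [eventually_ge_atTop x] with z hz
    simp [hzero z hz]
  exact (Real.rpow_pos_of_pos two_pos ρ).ne' (tendsto_nhds_unique (hf 2 two_pos) hlim)

end IsRegularlyVaryingAtTop

/-- Upper and lower Riemann–Stieltjes sums of `∫_{[1,∞)} φ d(-ψ)` over the grid `1, l, …, l ^ N`,
for decreasing `φ`, `ψ`; the upper sum bounds the tail beyond `l ^ N` by `φ (l ^ N) ψ (l ^ N)`. -/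
def upperStieltjesSum (φ ψ : ℝ → ℝ) (l : ℝ) (N : ℕ) : ℝ :=
  ∑ k ∈ Finset.range N, φ (l ^ k) * (ψ (l ^ k) - ψ (l ^ (k + 1))) + φ (l ^ N) * ψ (l ^ N)

def lowerStieltjesSum (φ ψ : ℝ → ℝ) (l : ℝ) (N : ℕ) : ℝ :=
  ∑ k ∈ Finset.range N, φ (l ^ (k + 1)) * (ψ (l ^ k) - ψ (l ^ (k + 1)))

theorem upperStieltjesSum_div_div (φ ψ : ℝ → ℝ) (a b l : ℝ) (N : ℕ) :
    upperStieltjesSum (fun u => φ u / a) (fun u => ψ u / b) l N =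
      upperStieltjesSum φ ψ l N / (a * b) := by
  simp only [upperStieltjesSum, add_div, Finset.sum_div]
  congr 1
  · exact Finset.sum_congr rfl fun k _ => by ring
  · ring

theorem lowerStieltjesSum_div_div (φ ψ : ℝ → ℝ) (a b l : ℝ) (N : ℕ) :
    lowerStieltjesSum (fun u => φ u / a) (fun u => ψ u / b) l N =
      lowerStieltjesSum φ ψ l N / (a * b) := by
  simp only [lowerStieltjesSum, Finset.sum_div]
  exact Finset.sum_congr rfl fun k _ => by ring

section Tendsto

variable {α : Type*} {L : Filter α} {φ ψ : α → ℝ → ℝ} {Φ Ψ : ℝ → ℝ} {l : ℝ}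

theorem tendsto_upperStieltjesSum (hφ : ∀ u > 0, Tendsto (fun x => φ x u) L (𝓝 (Φ u)))
    (hψ : ∀ u > 0, Tendsto (fun x => ψ x u) L (𝓝 (Ψ u))) (hl : 0 < l) (N : ℕ) :
    Tendsto (fun x => upperStieltjesSum (φ x) (ψ x) l N) L (𝓝 (upperStieltjesSum Φ Ψ l N)) :=
  (tendsto_finsetSum _ fun k _ => (hφ _ (pow_pos hl k)).mul
    ((hψ _ (pow_pos hl k)).sub (hψ _ (pow_pos hl (k + 1))))).add
    ((hφ _ (pow_pos hl N)).mul (hψ _ (pow_pos hl N)))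

theorem tendsto_lowerStieltjesSum (hφ : ∀ u > 0, Tendsto (fun x => φ x u) L (𝓝 (Φ u)))
    (hψ : ∀ u > 0, Tendsto (fun x => ψ x u) L (𝓝 (Ψ u))) (hl : 0 < l) (N : ℕ) :
    Tendsto (fun x => lowerStieltjesSum (φ x) (ψ x) l N) L (𝓝 (lowerStieltjesSum Φ Ψ l N)) :=
  tendsto_finsetSum _ fun k _ => (hφ _ (pow_pos hl (k + 1))).mul
    ((hψ _ (pow_pos hl k)).sub (hψ _ (pow_pos hl (k + 1))))

end Tendsto

section Rpow

variable {l ρ σ : ℝ}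

theorem upperStieltjesSum_rpow_le (hl : 1 ≤ l) (hρ : ρ ≤ 0) (hσ : σ ≤ 0) (N : ℕ) :
    upperStieltjesSum (· ^ ρ) (· ^ σ) l N ≤
      lowerStieltjesSum (· ^ ρ) (· ^ σ) l N + (1 - l ^ ρ) + (l ^ ρ * l ^ σ) ^ N := by
  have hl₀ : 0 ≤ l := zero_le_one.trans hl
  have hq : l ^ ρ ≤ 1 := Real.rpow_le_one_of_one_le_of_nonpos hl hρ
  have hr : l ^ σ ≤ 1 := Real.rpow_le_one_of_one_le_of_nonpos hl hσ
  simp only [upperStieltjesSum, lowerStieltjesSum, ← Real.rpow_pow_comm hl₀, mul_pow]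
  set q := l ^ ρ
  set r := l ^ σ
  have hq₀ : 0 ≤ q := Real.rpow_nonneg hl₀ ρ
  have hr₀ : 0 ≤ r := Real.rpow_nonneg hl₀ σ
  -- `q ^ k - q ^ (k + 1) ≤ 1 - q`, and the increments of `r ^ k` telescope to at most `1`.
  have hterm : ∀ k ∈ Finset.range N, q ^ k * (r ^ k - r ^ (k + 1)) ≤
      q ^ (k + 1) * (r ^ k - r ^ (k + 1)) + (1 - q) * (r ^ k - r ^ (k + 1)) := by
    intro k _
    have hΔ : 0 ≤ r ^ k - r ^ (k + 1) := by
      rw [pow_succ]; nlinarith [pow_nonneg hr₀ k]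
    have hqk : q ^ k ≤ q ^ (k + 1) + (1 - q) := by
      rw [pow_succ]; nlinarith [pow_le_one₀ hq₀ hq (n := k)]
    linarith [mul_le_mul_of_nonneg_right hqk hΔ]
  have htel : ∑ k ∈ Finset.range N, (r ^ k - r ^ (k + 1)) = 1 - r ^ N := by
    simpa using Finset.sum_range_sub' (fun k => r ^ k) N
  have hrN : 0 ≤ r ^ N := pow_nonneg hr₀ N
  calc ∑ k ∈ Finset.range N, q ^ k * (r ^ k - r ^ (k + 1)) + q ^ N * r ^ N
      ≤ ∑ k ∈ Finset.range N, q ^ (k + 1) * (r ^ k - r ^ (k + 1)) + (1 - q) * (1 - r ^ N)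
          + q ^ N * r ^ N := by
        rw [← htel, Finset.mul_sum, ← Finset.sum_add_distrib]
        gcongr with k hk
        exact hterm k hk
    _ ≤ _ := by nlinarith

theorem exists_upperStieltjesSum_rpow_le (hρ : ρ ≤ 0) (hσ : σ < 0) {ε : ℝ} (hε : 0 < ε) :
    ∃ l > 1, ∃ N, upperStieltjesSum (· ^ ρ) (· ^ σ) l N ≤
      lowerStieltjesSum (· ^ ρ) (· ^ σ) l N + ε := by
  have hcont : Tendsto (fun l : ℝ => l ^ ρ) (𝓝[>] 1) (𝓝 1) := by
    simpa using (Real.continuousAt_rpow_const 1 ρ (Or.inl one_ne_zero)).tendsto.mono_left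
      nhdsWithin_le_nhds
  obtain ⟨l, hl : 1 < l, hlρ⟩ := (eventually_mem_nhdsWithin.and ((hcont.const_sub 1).eventually
    (gt_mem_nhds (show (1 : ℝ) - 1 < ε / 2 by linarith)))).exists
  have hratio : l ^ ρ * l ^ σ < 1 := by
    rw [← Real.rpow_add (zero_lt_one.trans hl)]
    exact Real.rpow_lt_one_of_one_lt_of_neg hl (by linarith)
  have hratio₀ : 0 ≤ l ^ ρ * l ^ σ :=
    mul_nonneg (Real.rpow_nonneg (by linarith) ρ) (Real.rpow_nonneg (by linarith) σ)
  obtain ⟨N, hN⟩ := ((tendsto_pow_atTop_nhds_zero_of_lt_one hratio₀ hratio).eventually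
    (gt_mem_nhds (half_pos hε))).exists
  refine ⟨l, hl, N, (upperStieltjesSum_rpow_le hl.le hρ hσ.le N).trans ?_⟩
  linarith

theorem lowerStieltjesSum_rpow_one_pos (hl : 1 < l) (hσ : σ < 0) :
    0 < lowerStieltjesSum (· ^ ρ) (· ^ σ) l 1 := by
  simp only [lowerStieltjesSum, Finset.sum_range_one, pow_zero, zero_add, pow_one,
    Real.one_rpow]
  exact mul_pos (Real.rpow_pos_of_pos (zero_lt_one.trans hl) ρ)
    (sub_pos.2 (Real.rpow_lt_one_of_one_lt_of_neg hl hσ))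

end Rpow

section TailIntegral

variable {μ : Measure ℝ} {g : ℝ → ℝ}

theorem setIntegral_Ioi_eq_setIntegral_Ioc_add {a b : ℝ} (hab : a ≤ b)
    (hg : IntegrableOn g (Ioi a) μ) :
    ∫ z in Ioi a, g z ∂μ = ∫ z in Ioc a b, g z ∂μ + ∫ z in Ioi b, g z ∂μ := by
  rw [← setIntegral_union (Ioc_disjoint_Ioi le_rfl) measurableSet_Ioi
    (hg.mono_set Ioc_subset_Ioi_self) (hg.mono_set (Ioi_subset_Ioi hab)),
    Ioc_union_Ioi_eq_Ioi hab]

theorem setIntegral_Ioi_eq_sum_add {a : ℕ → ℝ} (ha : Monotone a)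
    (hg : IntegrableOn g (Ioi (a 0)) μ) (N : ℕ) :
    ∫ z in Ioi (a 0), g z ∂μ =
      ∑ k ∈ Finset.range N, ∫ z in Ioc (a k) (a (k + 1)), g z ∂μ + ∫ z in Ioi (a N), g z ∂μ := by
  induction N with
  | zero => simp
  | succ N ih =>
    rw [ih, Finset.sum_range_succ, add_assoc, ← setIntegral_Ioi_eq_setIntegral_Ioc_add
      (ha N.le_succ) (hg.mono_set (Ioi_subset_Ioi (ha (Nat.zero_le N))))]

variable [IsFiniteMeasure μ]

theorem integrableOn_Ioi_of_antitone (hg_anti : Antitone g) (hg_nonneg : ∀ x, 0 ≤ g x) (a : ℝ) :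
    IntegrableOn g (Ioi a) μ :=
  IntegrableOn.of_bound (measure_lt_top μ _) hg_anti.measurable.aestronglyMeasurable (g a)
    (ae_restrict_of_forall_mem measurableSet_Ioi fun z hz => by
      rw [Real.norm_of_nonneg (hg_nonneg z)]; exact hg_anti hz.le)

theorem setIntegral_le_mul_measureReal_of_antitone (hg_anti : Antitone g)
    (hg_nonneg : ∀ x, 0 ≤ g x) {s : Set ℝ} {a : ℝ} (hs : s ⊆ Ici a) :
    ∫ z in s, g z ∂μ ≤ g a * μ.real s := by
  refine (Real.le_norm_self _).trans (norm_setIntegral_le_of_norm_le_const (measure_lt_top μ _)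
    fun z hz => ?_)
  rw [Real.norm_of_nonneg (hg_nonneg z)]
  exact hg_anti (hs hz)

theorem mul_measureReal_le_setIntegral_of_antitone (hg_anti : Antitone g)
    (hg_nonneg : ∀ x, 0 ≤ g x) {a b : ℝ} :
    g b * μ.real (Ioc a b) ≤ ∫ z in Ioc a b, g z ∂μ :=
  setIntegral_ge_of_const_le_real measurableSet_Ioc (measure_ne_top μ _)
    (fun _ hz => hg_anti hz.2) ((integrableOn_Ioi_of_antitone hg_anti hg_nonneg a).mono_set
      Ioc_subset_Ioi_self)

theorem measureReal_Ioc_eq_sub {a b : ℝ} (hab : a ≤ b) :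
    μ.real (Ioc a b) = μ.real (Ioi a) - μ.real (Ioi b) := by
  rw [← Ioi_sdiff_Ioi, measureReal_sdiff (Ioi_subset_Ioi hab) measurableSet_Ioi]

theorem setIntegral_Ioi_le_upperStieltjesSum (hg_anti : Antitone g) (hg_nonneg : ∀ x, 0 ≤ g x)
    {l x : ℝ} (hl : 1 ≤ l) (hx : 0 ≤ x) (N : ℕ) :
    ∫ z in Ioi x, g z ∂μ ≤
      upperStieltjesSum (fun u => g (u * x)) (fun u => μ.real (Ioi (u * x))) l N := by
  have ha : Monotone fun k : ℕ => l ^ k * x := fun i j hij =>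
    mul_le_mul_of_nonneg_right (pow_le_pow_right₀ hl hij) hx
  have hsplit := setIntegral_Ioi_eq_sum_add ha
    (integrableOn_Ioi_of_antitone (μ := μ) hg_anti hg_nonneg _) N
  simp only [pow_zero, one_mul] at hsplit
  rw [hsplit, upperStieltjesSum]
  gcongr with k
  · rw [← measureReal_Ioc_eq_sub (ha k.le_succ)]
    exact setIntegral_le_mul_measureReal_of_antitone hg_anti hg_nonneg
      (Ioc_subset_Ioi_self.trans Ioi_subset_Ici_self)
  · exact setIntegral_le_mul_measureReal_of_antitone hg_anti hg_nonneg Ioi_subset_Ici_self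

theorem lowerStieltjesSum_le_setIntegral_Ioi (hg_anti : Antitone g) (hg_nonneg : ∀ x, 0 ≤ g x)
    {l x : ℝ} (hl : 1 ≤ l) (hx : 0 ≤ x) (N : ℕ) :
    lowerStieltjesSum (fun u => g (u * x)) (fun u => μ.real (Ioi (u * x))) l N ≤
      ∫ z in Ioi x, g z ∂μ := by
  have ha : Monotone fun k : ℕ => l ^ k * x := fun i j hij =>
    mul_le_mul_of_nonneg_right (pow_le_pow_right₀ hl hij) hx
  have hsplit := setIntegral_Ioi_eq_sum_add ha
    (integrableOn_Ioi_of_antitone (μ := μ) hg_anti hg_nonneg _) N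
  simp only [pow_zero, one_mul] at hsplit
  rw [hsplit, lowerStieltjesSum]
  refine le_add_of_le_of_nonneg (Finset.sum_le_sum fun k _ => ?_)
    (setIntegral_nonneg measurableSet_Ioi fun z _ => hg_nonneg z)
  rw [← measureReal_Ioc_eq_sub (ha k.le_succ)]
  exact mul_measureReal_le_setIntegral_of_antitone hg_anti hg_nonneg

end TailIntegral

theorem exists_tendsto_of_forall_sandwich {α : Type*} {L : Filter α} [L.NeBot] {f : α → ℝ}
    (h : ∀ ε > 0, ∃ lo hi : α → ℝ, ∃ a b : ℝ, Tendsto lo L (𝓝 a) ∧ Tendsto hi L (𝓝 b) ∧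
      b ≤ a + ε ∧ ∀ᶠ x in L, lo x ≤ f x ∧ f x ≤ hi x) :
    ∃ c, Tendsto f L (𝓝 c) := by
  obtain ⟨lo, hi, a, b, hlo, hhi, -, hf⟩ := h 1 one_pos
  have hf_le : IsBoundedUnder (· ≤ ·) L f :=
    hhi.isBoundedUnder_le.mono_le (hf.mono fun _ hx => hx.2)
  have hf_ge : IsBoundedUnder (· ≥ ·) L f :=
    hlo.isBoundedUnder_ge.mono_ge (hf.mono fun _ hx => hx.1)
  refine ⟨limsup f L, tendsto_of_liminf_eq_limsup
    (le_antisymm (liminf_le_limsup hf_le hf_ge) ?_) rfl hf_le hf_ge⟩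
  refine le_of_forall_pos_le_add fun ε hε => ?_
  obtain ⟨lo, hi, a, b, hlo, hhi, hba, hf⟩ := h ε hε
  calc limsup f L ≤ b := hhi.limsup_eq ▸ limsup_le_limsup (hf.mono fun _ hx => hx.2)
          hf_ge.isCoboundedUnder_le hhi.isBoundedUnder_le
    _ ≤ a + ε := hba
    _ ≤ liminf f L + ε := by
      gcongr
      exact hlo.liminf_eq ▸ liminf_le_liminf (hf.mono fun _ hx => hx.1)
        hlo.isBoundedUnder_ge hf_le.isCoboundedUnder_ge

theorem IsRegularlyVaryingAtTop.setIntegral_Ioi {μ : Measure ℝ} [IsFiniteMeasure μ]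
    {g : ℝ → ℝ} {ρ σ : ℝ} (hg : IsRegularlyVaryingAtTop g ρ) (hg_anti : Antitone g)
    (hg_nonneg : ∀ x, 0 ≤ g x) (hμ : IsRegularlyVaryingAtTop (fun x => μ.real (Ioi x)) σ)
    (hρ : ρ ≤ 0) (hσ : σ < 0) :
    IsRegularlyVaryingAtTop (fun x => ∫ z in Ioi x, g z ∂μ) (ρ + σ) := by
  have hg_pos := hg.pos_of_antitone hg_anti hg_nonneg
  have hμ_pos := hμ.pos_of_antitone (fun a b hab => measureReal_mono (Ioi_subset_Ioi hab))
    fun _ => measureReal_nonneg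
  have hden_pos : ∀ x, 0 < g x * μ.real (Ioi x) := fun x => mul_pos (hg_pos x) (hμ_pos x)
  set R := fun x => (∫ z in Ioi x, g z ∂μ) / (g x * μ.real (Ioi x))
  set φ := fun x u => g (u * x) / g x
  set ψ := fun x u => μ.real (Ioi (u * x)) / μ.real (Ioi x)
  have hR_sandwich {l : ℝ} (hl : 1 ≤ l) (N : ℕ) : ∀ᶠ x in atTop,
      lowerStieltjesSum (φ x) (ψ x) l N ≤ R x ∧ R x ≤ upperStieltjesSum (φ x) (ψ x) l N := by
    filter_upwards [eventually_ge_atTop 0] with x hx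
    rw [lowerStieltjesSum_div_div, upperStieltjesSum_div_div]
    exact ⟨div_le_div_of_nonneg_right
        (lowerStieltjesSum_le_setIntegral_Ioi hg_anti hg_nonneg hl hx N) (hden_pos x).le,
      div_le_div_of_nonneg_right
        (setIntegral_Ioi_le_upperStieltjesSum hg_anti hg_nonneg hl hx N) (hden_pos x).le⟩
  obtain ⟨c, hc⟩ : ∃ c, Tendsto R atTop (𝓝 c) := by
    refine exists_tendsto_of_forall_sandwich fun ε hε => ?_
    obtain ⟨l, hl, N, hN⟩ := exists_upperStieltjesSum_rpow_le hρ hσ hε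
    exact ⟨_, _, _, _, tendsto_lowerStieltjesSum hg hμ (by linarith) N,
      tendsto_upperStieltjesSum hg hμ (by linarith) N, hN, hR_sandwich hl.le N⟩
  have hc_pos : 0 < c := (lowerStieltjesSum_rpow_one_pos one_lt_two hσ).trans_le <|
    le_of_tendsto_of_tendsto (tendsto_lowerStieltjesSum hg hμ two_pos 1) hc
      ((hR_sandwich one_le_two 1).mono fun _ hx => hx.1)
  have hT := (IsRegularlyVaryingAtTop.of_tendsto hc hc_pos.ne').mul (hg.mul hμ)
  rw [zero_add] at hT
  exact hT.congr' (Eventually.of_forall fun x => div_mul_cancel₀ _ (hden_pos x).ne')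

theorem truncated_F_regularly_varying_general
    (γ₁ γ₂ : ℝ) (hγ₁ : 0 < γ₁) (hγ₂ : 0 < γ₂)
    (F G : StieltjesFunction ℝ)
    (hF0 : ∀ x ≤ (0 : ℝ), F x = 0)
    (hFtop : Tendsto F atTop (nhds 1)) (hGtop : Tendsto G atTop (nhds 1))
    (hFrv : ∀ x > (0 : ℝ),
      Tendsto (fun z => (1 - F (x * z)) / (1 - F z)) atTop (nhds (x ^ (-1 / γ₁))))
    (hGrv : ∀ x > (0 : ℝ),
      Tendsto (fun z => (1 - G (x * z)) / (1 - G z)) atTop (nhds (x ^ (-1 / γ₂))))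
    (p : ℝ) (hp : p = ∫ z in Set.Ioi (0 : ℝ), (1 - G z) ∂F.measure) (hppos : 0 < p)
    (Fobs : ℝ → ℝ)
    (hFobs : ∀ x, Fobs x = p⁻¹ * ∫ z in Set.Ioc (0 : ℝ) x, (1 - G z) ∂F.measure)
    (γ : ℝ) (hγ : γ = γ₁ * γ₂ / (γ₁ + γ₂)) :
    ∀ s > (0 : ℝ),
      Tendsto (fun x => (1 - Fobs (s * x)) / (1 - Fobs x)) atTop (nhds (s ^ (-1 / γ))) := by
  have hFbot : Tendsto F atBot (𝓝 0) :=
    tendsto_const_nhds.congr' ((eventually_le_atBot 0).mono fun x hx => (hF0 x hx).symm)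
  have := F.isFiniteMeasure hFbot hFtop
  have hG_anti : Antitone fun z => 1 - G z := fun a b hab => sub_le_sub_left (G.mono hab) 1
  have hG_nonneg : ∀ z, 0 ≤ 1 - G z := fun z => sub_nonneg.2 (G.mono.ge_of_tendsto hGtop z)
  have hF_tail : ∀ x, F.measure.real (Ioi x) = 1 - F x := fun x => by
    rw [measureReal_def, F.measure_Ioi hFtop, ENNReal.toReal_ofReal
      (sub_nonneg.2 (F.mono.ge_of_tendsto hFtop x))]
  have hT : IsRegularlyVaryingAtTop (fun x => ∫ z in Ioi x, (1 - G z) ∂F.measure)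
      (-1 / γ₂ + -1 / γ₁) :=
    IsRegularlyVaryingAtTop.setIntegral_Ioi hGrv hG_anti hG_nonneg (by simpa only [hF_tail])
      (div_neg_of_neg_of_pos (by norm_num) hγ₂).le (div_neg_of_neg_of_pos (by norm_num) hγ₁)
  have hsurv : ∀ x > 0, p⁻¹ * ∫ z in Ioi x, (1 - G z) ∂F.measure = 1 - Fobs x := fun x hx => by
    have hsplit := hp.trans (setIntegral_Ioi_eq_setIntegral_Ioc_add hx.le
      (integrableOn_Ioi_of_antitone hG_anti hG_nonneg 0))
    rw [hFobs, eq_sub_iff_add_eq, ← mul_add, add_comm, ← hsplit, inv_mul_cancel₀ hppos.ne']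
  have hexp : -1 / γ = -1 / γ₂ + -1 / γ₁ := by
    rw [hγ]; field_simp; ring
  rw [hexp]
  exact (hT.const_mul (inv_ne_zero hppos.ne')).congr' ((eventually_gt_atTop 0).mono hsurv)

/-- The survival function of the observed variable `X` in the random right-truncation
model is regularly varying at infinity with index `-1/γ`, where `γ = γ₁γ₂/(γ₁+γ₂)`. -/
theorem truncated_F_regularly_varying
    (γ₁ γ₂ : ℝ) (hγ₁ : 0 < γ₁) (hγ₂ : 0 < γ₂)
    (F G : StieltjesFunction ℝ)
    (hFcont : Continuous F) (hGcont : Continuous G)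
    (hF0 : ∀ x ≤ (0 : ℝ), F x = 0) (hG0 : ∀ x ≤ (0 : ℝ), G x = 0)
    (hFtop : Tendsto F atTop (nhds 1)) (hGtop : Tendsto G atTop (nhds 1))
    (hFrv : ∀ x > (0 : ℝ),
      Tendsto (fun z => (1 - F (x * z)) / (1 - F z)) atTop (nhds (x ^ (-1 / γ₁))))
    (hGrv : ∀ x > (0 : ℝ),
      Tendsto (fun z => (1 - G (x * z)) / (1 - G z)) atTop (nhds (x ^ (-1 / γ₂))))
    (p : ℝ) (hp : p = ∫ z in Set.Ioi (0 : ℝ), (1 - G z) ∂F.measure) (hppos : 0 < p)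
    (Fobs : ℝ → ℝ)
    (hFobs : ∀ x, Fobs x = p⁻¹ * ∫ z in Set.Ioc (0 : ℝ) x, (1 - G z) ∂F.measure)
    (γ : ℝ) (hγ : γ = γ₁ * γ₂ / (γ₁ + γ₂)) :
    ∀ s > (0 : ℝ),
      Tendsto (fun x => (1 - Fobs (s * x)) / (1 - Fobs x)) atTop (nhds (s ^ (-1 / γ))) :=
  truncated_F_regularly_varying_general γ₁ γ₂ hγ₁ hγ₂ F G hF0 hFtop hGtop hFrv hGrv p hp hppos Fobs
    hFobs γ hγ
end

section
/- Let γ₁ > 0 and let 𝐅 be a continuous distribution function on (0,∞) whose survival function 𝐅̄ := 1−𝐅 is everywhere positive and regularly varying at infinity with index −1/γ₁. Let 𝕂 : ℝ → ℝ satisfy: 𝕂 is non-increasing and right-continuous on [0,∞); 𝕂(s) = 0 for s ∉ [0,1) and 𝕂(s) ≥ 0 for s ∈ [0,1); and ∫_ℝ 𝕂(s) ds = 1. Then lim_{u→∞} ∫_u^∞ x^{−1} (𝐅̄(x)/𝐅̄(u)) 𝕂(𝐅̄(x)/𝐅̄(u)) dx = γ₁. -/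
/-!
Substituting `x = u y` turns the integral into `∫_1^∞ y⁻¹ R_u(y) 𝕂(R_u(y)) dy` with
`R_u(y) = 𝐅̄(uy)/𝐅̄(u) → y^(-1/γ₁)`. Iterating `𝐅̄(2z) ≤ c 𝐅̄(z)` (some `c < 1`, for large `z`)
gives the Potter-type bound `R_u(y) ≤ C y^(-ρ)` with `ρ > 0`, uniformly in large `u`; together
with `0 ≤ 𝕂 ≤ 𝕂(0)` this is an integrable majorant. A monotone `𝕂` is continuous off a countable
set, so dominated convergence applies, and the substitution `s = y^(-1/γ₁)` evaluates the limit
`∫_1^∞ y^(-1-1/γ₁) 𝕂(y^(-1/γ₁)) dy` as `γ₁ ∫ 𝕂 = γ₁`.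
-/

open MeasureTheory Filter Set Topology

lemma Real.rpow_logb_comm {b x y : ℝ} (hx : 0 < x) (hy : 0 < y) :
    x ^ Real.logb b y = y ^ Real.logb b x := by
  rw [Real.rpow_def_of_pos hx, Real.rpow_def_of_pos hy, Real.logb, Real.logb]
  ring_nf

lemma pow_floor_logb_le {c y : ℝ} (hc₀ : 0 < c) (hc₁ : c ≤ 1) (hy : 0 < y) :
    c ^ ⌊Real.logb 2 y⌋₊ ≤ c⁻¹ * y ^ Real.logb 2 c :=
  calc c ^ ⌊Real.logb 2 y⌋₊ = c ^ (⌊Real.logb 2 y⌋₊ : ℝ) := (Real.rpow_natCast c _).symm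
    _ ≤ c ^ (Real.logb 2 y - 1) := Real.rpow_le_rpow_of_exponent_ge hc₀ hc₁
        (by linarith [Nat.lt_floor_add_one (Real.logb 2 y)])
    _ = c⁻¹ * y ^ Real.logb 2 c := by
        rw [Real.rpow_sub hc₀, Real.rpow_one, Real.rpow_logb_comm hc₀ hy, div_eq_inv_mul]

section TailBound

variable {S : ℝ → ℝ} {c : ℝ}

lemma le_pow_mul_of_two_mul_le {u₀ v : ℝ} (hu₀ : 0 ≤ u₀) (hc : 0 ≤ c)
    (hstep : ∀ v ≥ u₀, S (2 * v) ≤ c * S v) (hv : u₀ ≤ v) (n : ℕ) :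
    S (2 ^ n * v) ≤ c ^ n * S v := by
  induction n with
  | zero => simp
  | succ n ih =>
    have hvn : u₀ ≤ 2 ^ n * v :=
      hv.trans (le_mul_of_one_le_left (hu₀.trans hv) (one_le_pow₀ one_le_two))
    calc S (2 ^ (n + 1) * v) = S (2 * (2 ^ n * v)) := by ring_nf
      _ ≤ c * S (2 ^ n * v) := hstep _ hvn
      _ ≤ c * (c ^ n * S v) := mul_le_mul_of_nonneg_left ih hc
      _ = c ^ (n + 1) * S v := by ring

lemma eventually_div_le_rpow_logb (hS_anti : Antitone S) (hS_pos : ∀ x, 0 < S x)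
    (hc₀ : 0 < c) (hc₁ : c < 1) (hstep : ∀ᶠ z in atTop, S (2 * z) ≤ c * S z) :
    ∀ᶠ u in atTop, ∀ y, 1 ≤ y → S (u * y) / S u ≤ c⁻¹ * y ^ Real.logb 2 c := by
  obtain ⟨u₀, hu₀⟩ := eventually_atTop.mp hstep
  filter_upwards [eventually_ge_atTop (max u₀ 0)] with u hu y hy
  set n := ⌊Real.logb 2 y⌋₊
  have h2n : (2 : ℝ) ^ n ≤ y :=
    calc (2 : ℝ) ^ n = 2 ^ (n : ℝ) := (Real.rpow_natCast 2 n).symm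
      _ ≤ 2 ^ Real.logb 2 y := Real.rpow_le_rpow_of_exponent_le one_le_two
          (Nat.floor_le (Real.logb_nonneg one_lt_two hy))
      _ = y := Real.rpow_logb two_pos (by norm_num) (by linarith)
  rw [div_le_iff₀ (hS_pos u)]
  calc S (u * y) ≤ S (2 ^ n * u) := hS_anti (by
        rw [mul_comm u]; exact mul_le_mul_of_nonneg_right h2n (le_of_max_le_right hu))
    _ ≤ c ^ n * S u := le_pow_mul_of_two_mul_le (le_max_right _ _) hc₀.le
        (fun v hv => hu₀ v (le_of_max_le_left hv)) hu n
    _ ≤ c⁻¹ * y ^ Real.logb 2 c * S u :=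
        mul_le_mul_of_nonneg_right (pow_floor_logb_le hc₀ hc₁.le (by linarith)) (hS_pos u).le

lemma exists_rpow_bound_of_tendsto_two_mul (hS_anti : Antitone S) (hS_pos : ∀ x, 0 < S x)
    {a : ℝ} (ha : a < 1) (hS : Tendsto (fun z => S (2 * z) / S z) atTop (𝓝 a)) :
    ∃ C ρ : ℝ, 0 < ρ ∧ ∀ᶠ u in atTop, ∀ y, 1 ≤ y → S (u * y) / S u ≤ C * y ^ (-ρ) := by
  obtain ⟨c, hac, hc₁⟩ := exists_between (max_lt ha one_pos)
  have hc₀ : 0 < c := (le_max_right a 0).trans_lt hac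
  have hstep : ∀ᶠ z in atTop, S (2 * z) ≤ c * S z :=
    (hS.eventually_lt_const ((le_max_left a 0).trans_lt hac)).mono fun z hz =>
      ((div_lt_iff₀ (hS_pos z)).mp hz).le
  refine ⟨c⁻¹, -Real.logb 2 c, neg_pos.2 (Real.logb_neg one_lt_two hc₀ hc₁), ?_⟩
  simpa only [neg_neg] using eventually_div_le_rpow_logb hS_anti hS_pos hc₀ hc₁ hstep

end TailBound

lemma setIntegral_Ioi_inv_mul_mul_comp_mul_left (g h : ℝ → ℝ) {u : ℝ} (hu : 0 < u) :
    ∫ x in Ioi u, x⁻¹ * g x * h x = ∫ y in Ioi 1, y⁻¹ * g (u * y) * h (u * y) := by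
  have hscale := integral_comp_mul_left_Ioi' (fun x => x⁻¹ * g x * h x) 1 hu
  rw [mul_one] at hscale
  rw [← hscale, smul_eq_mul, ← integral_const_mul]
  refine setIntegral_congr_fun measurableSet_Ioi fun y (hy : 1 < y) => ?_
  field_simp [hu.ne', (one_pos.trans hy).ne']

section Kernel

variable {K : ℝ → ℝ}

lemma measurable_of_antitoneOn_Ici (hK_anti : AntitoneOn K (Ici 0)) (hK_neg : ∀ s < 0, K s = 0) :
    Measurable K := by
  have hext : Antitone fun s => K (max s 0) := fun a b hab =>
    hK_anti (le_max_right a 0) (le_max_right b 0) (max_le_max_right 0 hab)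
  have hK : K = (Ici 0).indicator fun s => K (max s 0) := by
    ext s
    by_cases hs : 0 ≤ s
    · simp [hs]
    · simp [hs, hK_neg s (not_le.mp hs)]
  rw [hK]
  exact hext.measurable.indicator measurableSet_Ici

lemma norm_le_apply_zero_of_antitoneOn_Ici (hK_anti : AntitoneOn K (Ici 0))
    (hK_supp : ∀ s ∉ Ico (0 : ℝ) 1, K s = 0) (hK_nonneg : ∀ s ∈ Ico (0 : ℝ) 1, 0 ≤ K s)
    {s : ℝ} (hs : 0 ≤ s) : ‖K s‖ ≤ K 0 := by
  by_cases hs1 : s < 1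
  · rw [Real.norm_of_nonneg (hK_nonneg s ⟨hs, hs1⟩)]
    exact hK_anti (mem_Ici.2 le_rfl) hs hs
  · rw [hK_supp s fun h => hs1 h.2, norm_zero]
    exact hK_nonneg 0 ⟨le_rfl, one_pos⟩

lemma countable_not_continuousAt_of_antitoneOn_Ici (hK_anti : AntitoneOn K (Ici 0)) :
    {s | 0 < s ∧ ¬ContinuousAt K s}.Countable :=
  hK_anti.countable_not_continuousWithinAt.mono fun _ ⟨hs, hcont⟩ =>
    mem_sep (mem_Ici.2 hs.le) fun h => hcont (h.continuousAt (Ici_mem_nhds hs))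

lemma ae_continuousAt_comp_rpow (hK : {s | 0 < s ∧ ¬ContinuousAt K s}.Countable)
    {p : ℝ} (hp : p ≠ 0) : ∀ᵐ y, 0 < y → ContinuousAt K (y ^ p) := by
  have hnull : volume ((fun s => s ^ p⁻¹) '' {s | 0 < s ∧ ¬ContinuousAt K s}) = 0 :=
    (hK.image _).measure_zero _
  filter_upwards [measure_eq_zero_iff_ae_notMem.mp hnull] with y hy hy0
  by_contra hcont
  refine hy ⟨y ^ p, ⟨Real.rpow_pos_of_pos hy0 p, hcont⟩, ?_⟩
  show (y ^ p) ^ p⁻¹ = y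
  rw [← Real.rpow_mul hy0.le, mul_inv_cancel₀ hp, Real.rpow_one]

lemma integral_Ioi_one_inv_mul_rpow_mul_comp_rpow {γ : ℝ} (hγ : 0 < γ)
    (hK_supp : ∀ s ∉ Ico (0 : ℝ) 1, K s = 0) :
    ∫ y in Ioi (1 : ℝ), y⁻¹ * y ^ (-1 / γ) * K (y ^ (-1 / γ)) = γ * ∫ s, K s := by
  set p := -1 / γ
  have hp : p < 0 := div_neg_of_neg_of_pos (by norm_num) hγ
  have hγp : γ * -p = 1 := by
    simp only [p]
    field_simp
  have hK_Ioi : ∫ s in Ioi 0, K s = ∫ s, K s := by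
    rw [← integral_Ici_eq_integral_Ioi]
    exact setIntegral_eq_integral_of_forall_compl_eq_zero fun s hs => hK_supp s fun h => hs h.1
  have hvanish : ∀ y ∈ Ioi (0 : ℝ) \ Ioi 1, y⁻¹ * y ^ p * K (y ^ p) = 0 := by
    rintro y ⟨hy0, hy1⟩
    have h1 : 1 ≤ y ^ p := Real.one_le_rpow_of_pos_of_le_one_of_nonpos hy0 (not_lt.mp hy1) hp.le
    rw [hK_supp _ fun h => (not_lt.mpr h1) h.2, mul_zero]
  calc ∫ y in Ioi 1, y⁻¹ * y ^ p * K (y ^ p)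
      = ∫ y in Ioi 0, y⁻¹ * y ^ p * K (y ^ p) :=
        (setIntegral_eq_of_subset_of_forall_sdiff_eq_zero measurableSet_Ioi
          (Ioi_subset_Ioi zero_le_one) hvanish).symm
    _ = ∫ y in Ioi 0, γ * ((|p| * y ^ (p - 1)) • K (y ^ p)) := by
        refine setIntegral_congr_fun measurableSet_Ioi fun y (hy : 0 < y) => ?_
        rw [abs_of_neg hp, Real.rpow_sub hy, Real.rpow_one, smul_eq_mul]
        field_simp
        linear_combination (-K (y ^ p)) * hγp
    _ = γ * ∫ s, K s := by rw [integral_const_mul, integral_comp_rpow_Ioi K hp.ne, hK_Ioi]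

lemma tendsto_integral_Ioi_one_of_rpow_bound {R : ℝ → ℝ → ℝ} {g : ℝ → ℝ} {M C ρ : ℝ}
    (hρ : 0 < ρ) (hK_meas : Measurable K) (hK_bdd : ∀ s, 0 ≤ s → ‖K s‖ ≤ M)
    (hK_cont : ∀ᵐ y, 1 < y → ContinuousAt K (g y))
    (hR_meas : ∀ u, Measurable (R u)) (hR_nonneg : ∀ u y, 0 ≤ R u y)
    (hR_bound : ∀ᶠ u in atTop, ∀ y, 1 < y → R u y ≤ C * y ^ (-ρ))
    (hR_lim : ∀ y, 1 < y → Tendsto (fun u => R u y) atTop (𝓝 (g y))) :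
    Tendsto (fun u => ∫ y in Ioi 1, y⁻¹ * R u y * K (R u y)) atTop
      (𝓝 (∫ y in Ioi 1, y⁻¹ * g y * K (g y))) := by
  have hbound_int : IntegrableOn (fun y => C * M * y ^ (-1 - ρ)) (Ioi 1) :=
    (integrableOn_Ioi_rpow_of_lt (by linarith) one_pos).const_mul _
  refine tendsto_integral_filter_of_dominated_convergence _
    (Eventually.of_forall fun u => ?_) ?_ hbound_int ?_
  · exact ((measurable_inv.mul (hR_meas u)).mul (hK_meas.comp (hR_meas u))).aestronglyMeasurable
  · filter_upwards [hR_bound] with u hu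
    filter_upwards [ae_restrict_mem measurableSet_Ioi] with y (hy : 1 < y)
    have hy0 : 0 < y := one_pos.trans hy
    have hyR : 0 ≤ y⁻¹ * R u y := mul_nonneg (inv_nonneg.2 hy0.le) (hR_nonneg u y)
    calc ‖y⁻¹ * R u y * K (R u y)‖ = y⁻¹ * R u y * ‖K (R u y)‖ := by
          rw [norm_mul, Real.norm_of_nonneg hyR]
      _ ≤ y⁻¹ * (C * y ^ (-ρ)) * M := by
          have hRC := mul_le_mul_of_nonneg_left (hu y hy) (inv_nonneg.2 hy0.le)
          exact mul_le_mul hRC (hK_bdd _ (hR_nonneg u y)) (norm_nonneg _) (hyR.trans hRC)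
      _ = C * M * y ^ (-1 - ρ) := by
          rw [sub_eq_add_neg, Real.rpow_add hy0, Real.rpow_neg_one]
          ring
  · filter_upwards [ae_restrict_mem measurableSet_Ioi, ae_restrict_of_ae hK_cont]
      with y (hy : 1 < y) hcont
    exact (tendsto_const_nhds.mul (hR_lim y hy)).mul ((hcont hy).tendsto.comp (hR_lim y hy))

end Kernel

theorem kernel_limit_one_general
    (γ₁ : ℝ) (hγ₁ : 0 < γ₁)
    (F : ℝ → ℝ) (hFmono : Monotone F)
    (hFbar_pos : ∀ x, F x < 1)
    (hFrv : ∀ x > (0 : ℝ),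
      Tendsto (fun z => (1 - F (x * z)) / (1 - F z)) atTop (nhds (x ^ (-1 / γ₁))))
    (K : ℝ → ℝ)
    -- [C1] : non-increasing and right-continuous on [0,∞)
    (hK_anti : AntitoneOn K (Set.Ici 0))
    -- [C2] : supported on [0,1) and nonnegative there
    (hK_supp : ∀ s ∉ Set.Ico (0 : ℝ) 1, K s = 0)
    (hK_nonneg : ∀ s ∈ Set.Ico (0 : ℝ) 1, 0 ≤ K s)
    -- [C3] : integrates to one
    (hK_int : ∫ s, K s = 1) :
    Tendsto
      (fun u => ∫ x in Set.Ioi u,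
        x⁻¹ * ((1 - F x) / (1 - F u)) * K ((1 - F x) / (1 - F u)))
      atTop (nhds γ₁) := by
  set S : ℝ → ℝ := fun x => 1 - F x
  have hS_pos : ∀ x, 0 < S x := fun x => sub_pos.2 (hFbar_pos x)
  have hS_anti : Antitone S := fun a b hab => sub_le_sub_left (hFmono hab) 1
  have hp : -1 / γ₁ < 0 := div_neg_of_neg_of_pos (by norm_num) hγ₁
  obtain ⟨C, ρ, hρ, hpotter⟩ := exists_rpow_bound_of_tendsto_two_mul hS_anti hS_pos
    (Real.rpow_lt_one_of_one_lt_of_neg one_lt_two hp) (hFrv 2 two_pos)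
  have hlim := tendsto_integral_Ioi_one_of_rpow_bound (R := fun u y => S (u * y) / S u) hρ
    (measurable_of_antitoneOn_Ici hK_anti fun s hs => hK_supp s fun h => (not_le.2 hs) h.1)
    (fun _ => norm_le_apply_zero_of_antitoneOn_Ici hK_anti hK_supp hK_nonneg)
    ((ae_continuousAt_comp_rpow (countable_not_continuousAt_of_antitoneOn_Ici hK_anti)
      hp.ne).mono fun y h hy => h (one_pos.trans hy))
    (fun u => (hS_anti.measurable.comp (measurable_const_mul u)).div_const _)
    (fun u y => div_nonneg (hS_pos _).le (hS_pos u).le)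
    (hpotter.mono fun u hu y hy => hu y hy.le)
    (fun y hy => (hFrv y (one_pos.trans hy)).congr fun z => by simp only [S, mul_comm y z])
  rw [integral_Ioi_one_inv_mul_rpow_mul_comp_rpow hγ₁ hK_supp, hK_int, mul_one] at hlim
  refine hlim.congr' ?_
  filter_upwards [eventually_gt_atTop 0] with u hu
  exact (setIntegral_Ioi_inv_mul_mul_comp_mul_left (fun x => S x / S u)
    (fun x => K (S x / S u)) hu).symm

/-- Limit `(limit-1)` of the paper: for a heavy-tailed df `𝐅` with tail index `γ₁` and a
kernel `𝕂` satisfying `[C1]-[C3]`,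
`∫_u^∞ x⁻¹ (𝐅̄(x)/𝐅̄(u)) 𝕂(𝐅̄(x)/𝐅̄(u)) dx → γ₁` as `u → ∞`. -/
theorem kernel_limit_one
    (γ₁ : ℝ) (hγ₁ : 0 < γ₁)
    (F : ℝ → ℝ) (hFmono : Monotone F) (hFcont : Continuous F)
    (hF0 : ∀ x ≤ (0 : ℝ), F x = 0) (hFtop : Tendsto F atTop (nhds 1))
    (hFbar_pos : ∀ x, F x < 1)
    (hFrv : ∀ x > (0 : ℝ),
      Tendsto (fun z => (1 - F (x * z)) / (1 - F z)) atTop (nhds (x ^ (-1 / γ₁))))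
    (K : ℝ → ℝ)
    -- [C1] : non-increasing and right-continuous on [0,∞)
    (hK_anti : AntitoneOn K (Set.Ici 0))
    (hK_rc : ∀ s ∈ Set.Ici (0 : ℝ), ContinuousWithinAt K (Set.Ici s) s)
    -- [C2] : supported on [0,1) and nonnegative there
    (hK_supp : ∀ s ∉ Set.Ico (0 : ℝ) 1, K s = 0)
    (hK_nonneg : ∀ s ∈ Set.Ico (0 : ℝ) 1, 0 ≤ K s)
    -- [C3] : integrates to one
    (hK_int : ∫ s, K s = 1) :
    Tendsto
      (fun u => ∫ x in Set.Ioi u,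
        x⁻¹ * ((1 - F x) / (1 - F u)) * K ((1 - F x) / (1 - F u)))
      atTop (nhds γ₁) :=
  kernel_limit_one_general γ₁ hγ₁ F hFmono hFbar_pos hFrv K hK_anti hK_supp hK_nonneg hK_int
end

section
/- Let γ₁ > 0 and τ₁ < 0. Let 𝕂 : ℝ → ℝ be differentiable on (0,1) with 𝕂 and 𝕂′ bounded there, 𝕂(s) = 0 for s ∉ [0,1), and s𝕂(s) → 0 as s → 1⁻. Then ∫_1^∞ x^{−1/γ₁−1} · ((x^{τ₁/γ₁} − 1)/(γ₁τ₁)) · g_𝕂(x^{−1/γ₁}) dx = ∫_0^1 s^{−τ₁} 𝕂(s) ds, where g_𝕂(s) := 𝕂(s) + s𝕂′(s) is the derivative on (0,1) of Ψ_𝕂(s) := s𝕂(s). -/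
/-!
The substitution `s = x ^ (-1/γ₁)` maps `(1, ∞)` onto `(0, 1)` and turns the left-hand side into
`∫₀¹ u(s) Ψ_𝕂'(s) ds` with `u(s) = (s ^ (-τ₁) - 1) / τ₁`. Since `τ₁ < 0`, `u` is bounded on `(0, 1)`
and `u(1) = 0`, while `Ψ_𝕂(s) = s 𝕂(s) → 0` at both ends, so integrating by parts leaves
`-∫₀¹ u'(s) Ψ_𝕂(s) ds = ∫₀¹ s ^ (-τ₁ - 1) · s 𝕂(s) ds`.
-/

open MeasureTheory Filter Set Real Topology

theorem Real.rpow_image_Ioi_one_of_neg {c : ℝ} (hc : c < 0) :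
    (fun x : ℝ ↦ x ^ c) '' Ioi 1 = Ioo 0 1 := by
  ext s
  constructor
  · rintro ⟨x, hx, rfl⟩
    exact ⟨rpow_pos_of_pos (one_pos.trans hx) c, rpow_lt_one_of_one_lt_of_neg hx hc⟩
  · rintro ⟨hs₀, hs₁⟩
    exact ⟨s ^ c⁻¹, one_lt_rpow_of_pos_of_lt_one_of_neg hs₀ hs₁ (inv_lt_zero.2 hc),
      by simp [← rpow_mul hs₀.le, hc.ne]⟩

theorem integral_comp_rpow_Ioi_one_of_neg {E : Type*} [NormedAddCommGroup E] [NormedSpace ℝ E]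
    (g : ℝ → E) {c : ℝ} (hc : c < 0) :
    ∫ x in Ioi 1, (|c| * x ^ (c - 1)) • g (x ^ c) = ∫ s in Ioo 0 1, g s := by
  rw [← rpow_image_Ioi_one_of_neg hc, integral_image_eq_integral_abs_deriv_smul measurableSet_Ioi
    (fun x hx ↦ (hasDerivAt_rpow_const (Or.inl (one_pos.trans hx).ne')).hasDerivWithinAt)
    ((rpow_left_injOn hc.ne).mono fun x (hx : 1 < x) ↦ (one_pos.trans hx).le) g]
  refine setIntegral_congr_fun measurableSet_Ioi fun x hx ↦ ?_
  rw [abs_mul, abs_of_pos (rpow_pos_of_pos (one_pos.trans hx) _)]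

theorem integral_Ioo_mul_deriv_eq_neg_deriv_mul {a b : ℝ} (hab : a < b) {u u' v v' : ℝ → ℝ}
    (hu : ∀ x ∈ Ioo a b, HasDerivAt u (u' x) x) (hv : ∀ x ∈ Ioo a b, HasDerivAt v (v' x) x)
    (huv' : IntegrableOn (fun x ↦ u x * v' x) (Ioo a b))
    (hu'v : IntegrableOn (fun x ↦ u' x * v x) (Ioo a b))
    (ha : Tendsto (fun x ↦ u x * v x) (𝓝[>] a) (𝓝 0))
    (hb : Tendsto (fun x ↦ u x * v x) (𝓝[<] b) (𝓝 0)) :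
    ∫ x in Ioo a b, u x * v' x = -∫ x in Ioo a b, u' x * v x := by
  have hint : IntervalIntegrable (fun x ↦ u' x * v x + u x * v' x) volume a b :=
    (intervalIntegrable_iff_integrableOn_Ioo_of_le hab.le).2 (hu'v.add huv')
  have hftc := intervalIntegral.integral_eq_sub_of_hasDerivAt_of_tendsto hab
    (fun x hx ↦ (hu x hx).mul (hv x hx)) hint ha hb
  rw [intervalIntegral.integral_of_le hab.le, integral_Ioc_eq_integral_Ioo,
    integral_add hu'v huv', sub_zero] at hftc
  linarith

theorem tendsto_mul_nhdsGT_zero_of_abs_le {K : ℝ → ℝ} {M : ℝ} (hK : ∀ s ∈ Ioo 0 1, |K s| ≤ M) :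
    Tendsto (fun s ↦ s * K s) (𝓝[>] 0) (𝓝 0) :=
  tendsto_nhdsWithin_of_tendsto_nhds tendsto_id |>.zero_mul_isBoundedUnder_le <|
    isBoundedUnder_of_eventually_le (a := M) <| eventually_map.2 <|
      eventually_of_mem (Ioo_mem_nhdsGT one_pos) hK

theorem hasDerivAt_rpow_neg_sub_one_div {τ s : ℝ} (hτ : τ ≠ 0) (hs : s ≠ 0) :
    HasDerivAt (fun s : ℝ ↦ (s ^ (-τ) - 1) / τ) (-s ^ (-τ - 1)) s := by
  refine (((hasDerivAt_rpow_const (p := -τ) (Or.inl hs)).sub_const 1).div_const τ).congr_deriv ?_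
  rw [neg_mul, neg_div, mul_div_cancel_left₀ _ hτ]

theorem abs_rpow_neg_sub_one_div_le {τ s : ℝ} (hτ : τ < 0) (hs : s ∈ Ioo 0 1) :
    |(s ^ (-τ) - 1) / τ| ≤ 1 / -τ := by
  have h₀ : 0 < s ^ (-τ) := rpow_pos_of_pos hs.1 _
  have h₁ : s ^ (-τ) ≤ 1 := rpow_le_one hs.1.le hs.2.le (by linarith)
  rw [abs_div, abs_of_neg hτ, abs_of_nonpos (by linarith)]
  exact div_le_div_of_nonneg_right (by linarith) (by linarith)

theorem integral_rpow_neg_sub_one_div_mul_deriv_eq {τ M : ℝ} (hτ : τ < 0) {K : ℝ → ℝ}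
    (hK_diff : ∀ s ∈ Ioo (0 : ℝ) 1, DifferentiableAt ℝ K s)
    (hK_bdd : ∀ s ∈ Ioo (0 : ℝ) 1, |K s| ≤ M ∧ |deriv K s| ≤ M)
    (hK_lim : Tendsto (fun s ↦ s * K s) (𝓝[<] 1) (𝓝 0)) :
    ∫ s in Ioo 0 1, (s ^ (-τ) - 1) / τ * (K s + s * deriv K s)
      = ∫ s in Ioo 0 1, s ^ (-τ) * K s := by
  set u : ℝ → ℝ := fun s ↦ (s ^ (-τ) - 1) / τ
  have hpow_cont : Continuous fun s : ℝ ↦ s ^ (-τ) := continuous_rpow_const (by linarith)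
  have hu_cont : Continuous u := (hpow_cont.sub continuous_const).div_const τ
  have hK_meas : AEStronglyMeasurable K (volume.restrict (Ioo 0 1)) :=
    ContinuousOn.aestronglyMeasurable (fun s hs ↦ (hK_diff s hs).continuousAt.continuousWithinAt)
      measurableSet_Ioo
  have hΨ : ∀ s ∈ Ioo (0 : ℝ) 1, HasDerivAt (fun s ↦ s * K s) (K s + s * deriv K s) s :=
    fun s hs ↦ by simpa using (hasDerivAt_id' s).fun_mul (hK_diff s hs).hasDerivAt
  have hint_ug : IntegrableOn (fun s ↦ u s * (K s + s * deriv K s)) (Ioo 0 1) := by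
    refine Integrable.of_bound (hu_cont.aestronglyMeasurable.mul (hK_meas.add
      (aestronglyMeasurable_id.mul (measurable_deriv K).aestronglyMeasurable))) (1 / -τ * (M + M)) ?_
    filter_upwards [ae_restrict_mem measurableSet_Ioo] with s hs
    have hs_abs : |s| ≤ 1 := abs_le.2 ⟨by linarith [hs.1], hs.2.le⟩
    calc ‖u s * (K s + s * deriv K s)‖ ≤ |u s| * (|K s| + |s| * |deriv K s|) := by
          rw [Real.norm_eq_abs, abs_mul, ← abs_mul s]
          gcongr
          exact abs_add_le _ _
      _ ≤ 1 / -τ * (M + 1 * M) := by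
          have hu := abs_rpow_neg_sub_one_div_le hτ hs
          obtain ⟨hK, hK'⟩ := hK_bdd s hs
          gcongr
          exact one_div_nonneg.2 (by linarith)
      _ = 1 / -τ * (M + M) := by ring
  have hint_Ψ : IntegrableOn (fun s ↦ s ^ (-τ) * K s) (Ioo 0 1) := by
    refine Integrable.of_bound (hpow_cont.aestronglyMeasurable.mul hK_meas) M ?_
    filter_upwards [ae_restrict_mem measurableSet_Ioo] with s hs
    rw [Real.norm_eq_abs, abs_mul, abs_of_pos (rpow_pos_of_pos hs.1 _)]
    exact (mul_le_of_le_one_left (abs_nonneg _) (rpow_le_one hs.1.le hs.2.le (by linarith))).trans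
      (hK_bdd s hs).1
  have hu'Ψ : EqOn (fun s ↦ -(s ^ (-τ) * K s)) (fun s ↦ -s ^ (-τ - 1) * (s * K s)) (Ioo 0 1) :=
    fun s hs ↦ by have := hs.1.ne'; simp only [rpow_sub_one this]; field_simp
  have hlim₀ : Tendsto (fun s ↦ u s * (s * K s)) (𝓝[>] 0) (𝓝 0) := by
    simpa using hu_cont.continuousWithinAt.tendsto.mul
      (tendsto_mul_nhdsGT_zero_of_abs_le fun s hs ↦ (hK_bdd s hs).1)
  have hlim₁ : Tendsto (fun s ↦ u s * (s * K s)) (𝓝[<] 1) (𝓝 0) := by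
    simpa [u] using hu_cont.continuousWithinAt.tendsto.mul hK_lim
  rw [integral_Ioo_mul_deriv_eq_neg_deriv_mul one_pos
    (fun s hs ↦ hasDerivAt_rpow_neg_sub_one_div hτ.ne hs.1.ne') hΨ hint_ug
    (hint_Ψ.neg.congr_fun hu'Ψ measurableSet_Ioo) hlim₀ hlim₁, ← integral_neg]
  exact setIntegral_congr_fun measurableSet_Ioo fun s hs ↦ by simp [← hu'Ψ hs]

theorem bias_weight_eq_abs_mul_comp_rpow {γ τ x : ℝ} (hγ : 0 < γ) (hτ : τ ≠ 0) (hx : 0 < x) :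
    x ^ (-1 / γ - 1) * ((x ^ (τ / γ) - 1) / (γ * τ))
      = |-1 / γ| * x ^ (-1 / γ - 1) * (((x ^ (-1 / γ)) ^ (-τ) - 1) / τ) := by
  rw [← rpow_mul hx.le, abs_of_neg (div_neg_of_neg_of_pos (by norm_num) hγ),
    show -1 / γ * -τ = τ / γ by ring]
  field_simp

theorem kernel_bias_integral_general
    (γ₁ τ₁ : ℝ) (hγ₁ : 0 < γ₁) (hτ₁ : τ₁ < 0)
    (K : ℝ → ℝ)
    (hK_diff : ∀ s ∈ Set.Ioo (0 : ℝ) 1, DifferentiableAt ℝ K s)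
    (hK_bdd : ∃ M, ∀ s ∈ Set.Ioo (0 : ℝ) 1, |K s| ≤ M ∧ |deriv K s| ≤ M)
    (hK_lim : Tendsto (fun s => s * K s) (nhdsWithin 1 (Set.Iio 1)) (nhds 0)) :
    ∫ x in Set.Ioi (1 : ℝ),
        x ^ (-1 / γ₁ - 1) * ((x ^ (τ₁ / γ₁) - 1) / (γ₁ * τ₁)) *
          (K (x ^ (-1 / γ₁)) + x ^ (-1 / γ₁) * deriv K (x ^ (-1 / γ₁)))
      = ∫ s in (0 : ℝ)..1, s ^ (-τ₁) * K s := by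
  obtain ⟨M, hM⟩ := hK_bdd
  have hc : -1 / γ₁ < 0 := div_neg_of_neg_of_pos (by norm_num) hγ₁
  rw [intervalIntegral.integral_of_le zero_le_one, integral_Ioc_eq_integral_Ioo,
    ← integral_rpow_neg_sub_one_div_mul_deriv_eq hτ₁ hK_diff hM hK_lim,
    ← integral_comp_rpow_Ioi_one_of_neg _ hc]
  refine setIntegral_congr_fun measurableSet_Ioi fun x hx ↦ ?_
  rw [smul_eq_mul, bias_weight_eq_abs_mul_comp_rpow hγ₁ hτ₁.ne (one_pos.trans hx)]
  ring

/-- Bias-term identity of the paper: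
`∫_1^∞ x^{-1/γ₁-1} ((x^{τ₁/γ₁} - 1)/(γ₁τ₁)) g_𝕂(x^{-1/γ₁}) dx = ∫_0^1 s^{-τ₁} 𝕂(s) ds`,
where `g_𝕂(s) = 𝕂(s) + s𝕂'(s)` is the derivative of `Ψ_𝕂(s) = s𝕂(s)` on `(0,1)`. -/
theorem kernel_bias_integral
    (γ₁ τ₁ : ℝ) (hγ₁ : 0 < γ₁) (hτ₁ : τ₁ < 0)
    (K : ℝ → ℝ)
    (hK_diff : ∀ s ∈ Set.Ioo (0 : ℝ) 1, DifferentiableAt ℝ K s)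
    (hK_bdd : ∃ M, ∀ s ∈ Set.Ioo (0 : ℝ) 1, |K s| ≤ M ∧ |deriv K s| ≤ M)
    (hK_supp : ∀ s ∉ Set.Ico (0 : ℝ) 1, K s = 0)
    (hK_lim : Tendsto (fun s => s * K s) (nhdsWithin 1 (Set.Iio 1)) (nhds 0)) :
    ∫ x in Set.Ioi (1 : ℝ),
        x ^ (-1 / γ₁ - 1) * ((x ^ (τ₁ / γ₁) - 1) / (γ₁ * τ₁)) *
          (K (x ^ (-1 / γ₁)) + x ^ (-1 / γ₁) * deriv K (x ^ (-1 / γ₁)))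
      = ∫ s in (0 : ℝ)..1, s ^ (-τ₁) * K s :=
  kernel_bias_integral_general γ₁ τ₁ hγ₁ hτ₁ K hK_diff hK_bdd hK_lim
end
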